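/- Let K = Z_p with the action of Γ ≅ Z_p given through a continuous character κ : Γ → 1 + pZ_p, and let X be a Λ = Z_p[[T]]-module embedded in Λ^r with finite cokernel H of exponent p^e, where T acts via a fixed topological generator γ₀ (so Tm = (γ₀−1)m). For i ∈ Z define X(i) = X ⊗_{Z_p} Z_p(i) with Γ acting diagonally via κ^i on Z_p(i), and set Y_i = (X(i) ∩ TΛ(i)^r) + p^n X(i) ⊆ X(i). If i ≡ j (mod p^m) where m = max(0, e + n − n_F) satisfies κ(γ)^{p^m} ≡ 1 (mod p^{e+n}) for all γ ∈ Γ, then Y_j ⊗ Z_p(i−j) = Y_i as subgroups of X(i) under the canonical identification X(j)(i−j) = X(i). -/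

import Mathlib

/-!
The ambient multipliers of two twists differ by `c j - c i = (uʲ - uⁱ)(1 + T)`, and
`p^(e+n) ∣ uʲ - uⁱ` once `p^m ∣ j - i`. Writing this difference as `pⁿ · pᵉ · d` and using
`pᵉ Λ^r ⊆ X`, an element `c i • v ∈ X` agrees with `c j • v` modulo `pⁿ X`, and `c j • v` then lies
in `X` as well; so each `Y` is contained in the other.
-/

theorem Units.val_sub_one_dvd_val_zpow_sub_one {R : Type*} [CommRing R] (a : Rˣ) (k : ℤ) :
    (a : R) - 1 ∣ ((a ^ k : Rˣ) : R) - 1 := by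
  have hnat (n : ℕ) : (a : R) - 1 ∣ ((a ^ n : Rˣ) : R) - 1 := by
    simpa using sub_dvd_pow_sub_pow (a : R) 1 n
  obtain ⟨n, rfl | rfl⟩ := k.eq_nat_or_neg
  · exact_mod_cast hnat n
  · have : ((a ^ (-(n : ℤ)) : Rˣ) : R) - 1 = -((a ^ n)⁻¹ : Rˣ) * (((a ^ n : Rˣ) : R) - 1) := by
      rw [zpow_neg, zpow_natCast, mul_sub, mul_one, neg_mul, Units.inv_mul]; ring
    rw [this]
    exact (hnat n).mul_left _

theorem Units.dvd_val_zpow_sub_val_zpow {R : Type*} [CommRing R] (u : Rˣ) {q : R} {N : ℕ}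
    (hN : q ∣ (u : R) ^ N - 1) {i j : ℤ} (hij : (N : ℤ) ∣ j - i) :
    q ∣ ((u ^ j : Rˣ) : R) - ((u ^ i : Rˣ) : R) := by
  obtain ⟨t, ht⟩ := hij
  have hji : ((u ^ j : Rˣ) : R) - ((u ^ i : Rˣ) : R) =
      ((u ^ i : Rˣ) : R) * ((((u ^ N) ^ t : Rˣ) : R) - 1) := by
    rw [← zpow_natCast, ← zpow_mul, ← ht, mul_sub, mul_one, ← Units.val_mul, ← zpow_add,
      add_sub_cancel]
  rw [hji]
  exact (hN.trans (by simpa using (u ^ N).val_sub_one_dvd_val_zpow_sub_one t)).mul_left _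

namespace Submodule

variable {A M : Type*} [CommRing A] [AddCommGroup M] [Module A M]

theorem inf_range_lsmul_le_of_dvd_sub (X : Submodule A M) {q s c c' : A}
    (hq : ∀ v : M, q • v ∈ X) (h : s * q ∣ c' - c) :
    X ⊓ LinearMap.range (LinearMap.lsmul A M c) ≤
      X ⊓ LinearMap.range (LinearMap.lsmul A M c') ⊔ map (LinearMap.lsmul A M s) X := by
  rintro x ⟨hxX, v, rfl⟩
  obtain ⟨d, hd⟩ := h
  have hw : d • q • v ∈ X := X.smul_mem d (hq v)
  have hc' : c' • v = c • v + s • d • q • v := by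
    rw [smul_smul, smul_smul, ← add_smul]
    congr 1
    linear_combination hd
  refine mem_sup.mpr ⟨c' • v, ⟨?_, v, rfl⟩, -(s • d • q • v), neg_mem ⟨_, hw, rfl⟩, ?_⟩
  · rw [hc']
    exact X.add_mem hxX (X.smul_mem s hw)
  · simp only [LinearMap.lsmul_apply, hc', add_neg_cancel_right]

theorem inf_range_lsmul_sup_map_lsmul_eq_of_dvd_sub (X : Submodule A M) {q s c c' : A}
    (hq : ∀ v : M, q • v ∈ X) (h : s * q ∣ c' - c) :
    X ⊓ LinearMap.range (LinearMap.lsmul A M c) ⊔ map (LinearMap.lsmul A M s) X =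
      X ⊓ LinearMap.range (LinearMap.lsmul A M c') ⊔ map (LinearMap.lsmul A M s) X :=
  le_antisymm (sup_le (X.inf_range_lsmul_le_of_dvd_sub hq h) le_sup_right)
    (sup_le (X.inf_range_lsmul_le_of_dvd_sub hq (dvd_sub_comm.mp h)) le_sup_right)

end Submodule

theorem stmt16_general (p : ℕ) [Fact p.Prime] (r n e m : ℕ)
    (X : Submodule (PowerSeries ℤ_[p]) (Fin r → PowerSeries ℤ_[p]))
    (he : ∀ v : Fin r → PowerSeries ℤ_[p], ((p : PowerSeries ℤ_[p]) ^ e) • v ∈ X)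
    (u : ℤ_[p]ˣ)
    (hm : (p : ℤ_[p]) ^ (e + n) ∣ ((u : ℤ_[p]) ^ (p ^ m) - 1)) :
    ∀ c : ℤ → PowerSeries ℤ_[p],
      (∀ i : ℤ, c i = PowerSeries.C ((u ^ i : ℤ_[p]ˣ) : ℤ_[p]) *
        (1 + PowerSeries.X) - 1) →
    ∀ Y : ℤ → Submodule (PowerSeries ℤ_[p]) (Fin r → PowerSeries ℤ_[p]),
      (∀ i : ℤ, Y i =
        (X ⊓ LinearMap.range
            (LinearMap.lsmul (PowerSeries ℤ_[p]) (Fin r → PowerSeries ℤ_[p]) (c i))) ⊔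
          Submodule.map
            (LinearMap.lsmul (PowerSeries ℤ_[p]) (Fin r → PowerSeries ℤ_[p])
              ((p : PowerSeries ℤ_[p]) ^ n)) X) →
    ∀ i j : ℤ, (p : ℤ) ^ m ∣ (j - i) → Y i = Y j := by
  intro c hc Y hY i j hij
  have hu_dvd : (p : ℤ_[p]) ^ (e + n) ∣ ((u ^ j : ℤ_[p]ˣ) : ℤ_[p]) - ((u ^ i : ℤ_[p]ˣ) : ℤ_[p]) :=
    u.dvd_val_zpow_sub_val_zpow hm (by exact_mod_cast hij)
  have hc_dvd : (p : PowerSeries ℤ_[p]) ^ n * (p : PowerSeries ℤ_[p]) ^ e ∣ c j - c i := by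
    rw [hc, hc, sub_sub_sub_cancel_right, ← sub_mul, ← map_sub, ← pow_add, add_comm,
      ← map_natCast PowerSeries.C, ← map_pow]
    exact (map_dvd PowerSeries.C hu_dvd).mul_right _
  rw [hY, hY]
  exact X.inf_range_lsmul_sup_map_lsmul_eq_of_dvd_sub he hc_dvd

/-- Twist-periodicity of the submodules `Y_i`: let `Λ = ℤ_p[[T]]`, let `X ⊆ Λ^r` be a
`Λ`-submodule whose cokernel has exponent `p^e`, and let `κ(γ₀) = u ∈ 1 + pℤ_p` with
`u^{p^m} ≡ 1 (mod p^{e+n})`.  In the `i`-th Tate twist, `T` acts on the ambient module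
as multiplication by `c_i = C(uⁱ)(1+T) − 1`, and
`Y_i = (X ∩ c_i Λ^r) + pⁿ X`.  If `i ≡ j (mod p^m)` then `Y_i = Y_j` (under the
canonical identification of the underlying modules of the twists). -/
theorem stmt16 (p : ℕ) [Fact p.Prime] (r n e m : ℕ)
    (X : Submodule (PowerSeries ℤ_[p]) (Fin r → PowerSeries ℤ_[p]))
    (he : ∀ v : Fin r → PowerSeries ℤ_[p], ((p : PowerSeries ℤ_[p]) ^ e) • v ∈ X)
    (u : ℤ_[p]ˣ) (hu : (p : ℤ_[p]) ∣ ((u : ℤ_[p]) - 1))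
    (hm : (p : ℤ_[p]) ^ (e + n) ∣ ((u : ℤ_[p]) ^ (p ^ m) - 1)) :
    ∀ c : ℤ → PowerSeries ℤ_[p],
      (∀ i : ℤ, c i = PowerSeries.C ((u ^ i : ℤ_[p]ˣ) : ℤ_[p]) *
        (1 + PowerSeries.X) - 1) →
    ∀ Y : ℤ → Submodule (PowerSeries ℤ_[p]) (Fin r → PowerSeries ℤ_[p]),
      (∀ i : ℤ, Y i =
        (X ⊓ LinearMap.range
            (LinearMap.lsmul (PowerSeries ℤ_[p]) (Fin r → PowerSeries ℤ_[p]) (c i))) ⊔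
          Submodule.map
            (LinearMap.lsmul (PowerSeries ℤ_[p]) (Fin r → PowerSeries ℤ_[p])
              ((p : PowerSeries ℤ_[p]) ^ n)) X) →
    ∀ i j : ℤ, (p : ℤ) ^ m ∣ (j - i) → Y i = Y j :=
  stmt16_general p r n e m X he u hm
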